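/- (Abstract form of Theorem 3.1(2): relation between Shalika–Betti periods and relative periods in top degree.) Assume the nonzero complex numbers ω₊, ω₋, ω₊', ω₋', Ω, Ω' satisfy: (S1) for all s ∈ S, σ(ω₊)⁻¹ • s₊(Θ₊ s) = (ω₊')⁻¹ • Θ₊'(s_S s); (S2) for all s ∈ S, σ(ω₋)⁻¹ • s₋(Θ₋ s) = (ω₋')⁻¹ • Θ₋'(s_S s); (R) for all h ∈ H₊, σ(Ω) • s₋(T h) = Ω' • T'(s₊ h); (C) T ∘ Θ₊ = Θ₋ and T' ∘ Θ₊' = Θ₋'. Then σ(ω₊ · (ω₋ · Ω)⁻¹) = ω₊' · (ω₋' · Ω')⁻¹. -/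

import Mathlib

/-!
Evaluate everything at `x₀ = s_S x` for a nonzero `x ∈ S`. By (S1) and (S2), `s₊ (Θ₊ x)` and
`s₋ (Θ₋ x)` are the multiples `σ ω₊ / ω₊'` of `Θ₊' x₀` and `σ ω₋ / ω₋'` of `Θ₋' x₀`. Since `T` and
`T'` intertwine the comparison isomorphisms, (R) applied to `Θ₊ x` compares two multiples of the
nonzero vector `Θ₋' x₀ = T' (Θ₊' x₀)`, so `σ Ω · σ ω₋ / ω₋' = Ω' · σ ω₊ / ω₊'`, which rearranges
to the claim.
-/

theorem eq_div_smul_of_inv_smul_eq_inv_smul {K V : Type*} [Field K] [AddCommGroup V] [Module K V]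
    {a b : K} {x y : V} (ha : a ≠ 0) (h : a⁻¹ • x = b⁻¹ • y) : x = (a / b) • y := by
  rw [div_eq_mul_inv, mul_smul, ← h, smul_inv_smul₀ ha]

theorem mul_inv_mul_eq_of_mul_div_eq {K : Type*} [Field K] {a b c a' b' c' : K}
    (hb : b ≠ 0) (hc : c ≠ 0) (ha' : a' ≠ 0) (hb' : b' ≠ 0) (hc' : c' ≠ 0)
    (h : c * (b / b') = c' * (a / a')) : a * (b * c)⁻¹ = a' * (b' * c')⁻¹ := by
  field_simp at h ⊢
  linear_combination -h

theorem shalika_betti_relative_period_relation_general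
    (σ : ℂ ≃+* ℂ)
    {S S' Hp Hm Hp' Hm' : Type*}
    [AddCommGroup S] [Module ℂ S] [AddCommGroup S'] [Module ℂ S']
    [AddCommGroup Hp] [Module ℂ Hp] [AddCommGroup Hm] [Module ℂ Hm]
    [AddCommGroup Hp'] [Module ℂ Hp'] [AddCommGroup Hm'] [Module ℂ Hm']
    -- ℂ-linear isomorphisms
    (Θp : S ≃ₗ[ℂ] Hp) (Θm : S ≃ₗ[ℂ] Hm)
    (Θp' : S' ≃ₗ[ℂ] Hp') (Θm' : S' ≃ₗ[ℂ] Hm')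
    (T : Hp ≃ₗ[ℂ] Hm) (T' : Hp' ≃ₗ[ℂ] Hm')
    -- σ-semilinear bijections
    (s_S : S →ₛₗ[(σ : ℂ →+* ℂ)] S')
    (sp : Hp →ₛₗ[(σ : ℂ →+* ℂ)] Hp')
    (sm : Hm →ₛₗ[(σ : ℂ →+* ℂ)] Hm')
    (hsS : Function.Bijective s_S)
    -- W is nontrivial
    (hS : ∃ x : S, x ≠ 0)
    -- the periods
    (ωp ωm ωp' ωm' Ω Ω' : ℂ)
    (hωp : ωp ≠ 0) (hωm : ωm ≠ 0) (hωp' : ωp' ≠ 0) (hωm' : ωm' ≠ 0)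
    (hΩ : Ω ≠ 0) (hΩ' : Ω' ≠ 0)
    -- (S1)
    (hS1 : ∀ x : S, (σ ωp)⁻¹ • sp (Θp x) = (ωp')⁻¹ • Θp' (s_S x))
    -- (S2)
    (hS2 : ∀ x : S, (σ ωm)⁻¹ • sm (Θm x) = (ωm')⁻¹ • Θm' (s_S x))
    -- (R)
    (hR : ∀ h : Hp, σ Ω • sm (T h) = Ω' • T' (sp h))
    -- (C)
    (hC : ∀ x : S, T (Θp x) = Θm x)
    (hC' : ∀ x' : S', T' (Θp' x') = Θm' x') :
    σ (ωp * (ωm * Ω)⁻¹) = ωp' * (ωm' * Ω')⁻¹ := by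
  obtain ⟨x, hx⟩ := hS
  have hv : Θm' (s_S x) ≠ 0 := Θm'.map_ne_zero_iff.2 ((map_ne_zero_iff s_S hsS.1).2 hx)
  have hp := eq_div_smul_of_inv_smul_eq_inv_smul (σ.map_ne_zero_iff.2 hωp) (hS1 x)
  have hm := eq_div_smul_of_inv_smul_eq_inv_smul (σ.map_ne_zero_iff.2 hωm) (hS2 x)
  have hscalar : σ Ω * (σ ωm / ωm') = Ω' * (σ ωp / ωp') := by
    refine smul_left_injective ℂ hv ?_
    simpa only [hC, hm, hp, map_smul, hC', smul_smul] using hR (Θp x)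
  rw [map_mul, map_inv₀, map_mul]
  exact mul_inv_mul_eq_of_mul_div_eq (σ.map_ne_zero_iff.2 hωm) (σ.map_ne_zero_iff.2 hΩ)
    hωp' hωm' hΩ' hscalar

/-- Abstract form of Theorem 3.1(2): relation between Shalika–Betti periods
and relative periods in top degree. -/
theorem shalika_betti_relative_period_relation
    (σ : ℂ ≃+* ℂ)
    {S S' Hp Hm Hp' Hm' : Type*}
    [AddCommGroup S] [Module ℂ S] [AddCommGroup S'] [Module ℂ S']
    [AddCommGroup Hp] [Module ℂ Hp] [AddCommGroup Hm] [Module ℂ Hm]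
    [AddCommGroup Hp'] [Module ℂ Hp'] [AddCommGroup Hm'] [Module ℂ Hm']
    -- ℂ-linear isomorphisms
    (Θp : S ≃ₗ[ℂ] Hp) (Θm : S ≃ₗ[ℂ] Hm)
    (Θp' : S' ≃ₗ[ℂ] Hp') (Θm' : S' ≃ₗ[ℂ] Hm')
    (T : Hp ≃ₗ[ℂ] Hm) (T' : Hp' ≃ₗ[ℂ] Hm')
    -- σ-semilinear bijections
    (s_S : S →ₛₗ[(σ : ℂ →+* ℂ)] S')
    (sp : Hp →ₛₗ[(σ : ℂ →+* ℂ)] Hp')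
    (sm : Hm →ₛₗ[(σ : ℂ →+* ℂ)] Hm')
    (hsS : Function.Bijective s_S)
    (hsp : Function.Bijective sp)
    (hsm : Function.Bijective sm)
    -- W is nontrivial
    (hS : ∃ x : S, x ≠ 0)
    -- the periods
    (ωp ωm ωp' ωm' Ω Ω' : ℂ)
    (hωp : ωp ≠ 0) (hωm : ωm ≠ 0) (hωp' : ωp' ≠ 0) (hωm' : ωm' ≠ 0)
    (hΩ : Ω ≠ 0) (hΩ' : Ω' ≠ 0)
    -- (S1)
    (hS1 : ∀ x : S, (σ ωp)⁻¹ • sp (Θp x) = (ωp')⁻¹ • Θp' (s_S x))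
    -- (S2)
    (hS2 : ∀ x : S, (σ ωm)⁻¹ • sm (Θm x) = (ωm')⁻¹ • Θm' (s_S x))
    -- (R)
    (hR : ∀ h : Hp, σ Ω • sm (T h) = Ω' • T' (sp h))
    -- (C)
    (hC : ∀ x : S, T (Θp x) = Θm x)
    (hC' : ∀ x' : S', T' (Θp' x') = Θm' x') :
    σ (ωp * (ωm * Ω)⁻¹) = ωp' * (ωm' * Ω')⁻¹ :=
  shalika_betti_relative_period_relation_general σ Θp Θm Θp' Θm' T T' s_S sp sm hsS hS ωp ωm ωp' ωm'
    Ω Ω' hωp hωm hωp' hωm' hΩ hΩ' hS1 hS2 hR hC hC'
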